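/- arXiv:1904.01961 — 6 statements merged into one kernel-verified Lean document; each statement's English description precedes it below -/
import Mathlib

section
/- For nonnegative real numbers a ≥ b and p ≥ 2, we have (a - b) * (a^(p-1) - b^(p-1)) ≥ (a - b)^p. -/
theorem stmt_0 (a b p : ℝ) (hb : 0 ≤ b) (hab : b ≤ a) (hp : 2 ≤ p) :
    (a - b) ^ p ≤ (a - b) * (a ^ (p - 1) - b ^ (p - 1)) := by
  have h0 : (0:ℝ) ≤ a - b := by linarith
  have hp1 : (1:ℝ) ≤ p - 1 := by linarith
  have key : (a - b) ^ (p - 1) + b ^ (p - 1) ≤ a ^ (p - 1) := by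
    have h := NNReal.add_rpow_le_rpow_add ((a - b).toNNReal) (b.toNNReal) hp1
    have h2 := NNReal.coe_le_coe.2 h
    push_cast [Real.coe_toNNReal _ h0, Real.coe_toNNReal _ hb] at h2
    simpa using h2
  rcases eq_or_lt_of_le h0 with h | h
  · have ha : a = b := by linarith
    rw [ha]
    simp [Real.zero_rpow (by positivity : p ≠ 0)]
  · have heq : (a - b) ^ p = (a - b) * (a - b) ^ (p - 1) := by
      nth_rewrite 1 [show p = 1 + (p - 1) by ring]
      exact Real.rpow_one_add' h0 (by intro hc; nlinarith)
    rw [heq]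
    have h2 : (a - b) ^ (p - 1) ≤ a ^ (p - 1) - b ^ (p - 1) := by linarith
    exact mul_le_mul_of_nonneg_left h2 h0
end

section
/- For nonnegative real numbers a ≥ b and p ∈ [1, 2], we have (a - b) * (a^(p-1) - b^(p-1)) ≤ (a - b)^p. -/
lemma rpow_add_le_add_rpow_real {x y q : ℝ} (hx : 0 ≤ x) (hy : 0 ≤ y)
    (hq0 : 0 ≤ q) (hq1 : q ≤ 1) : (x + y) ^ q ≤ x ^ q + y ^ q := by
  lift x to NNReal using hx
  lift y to NNReal using hy
  have := NNReal.rpow_add_le_add_rpow x y hq0 hq1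
  exact_mod_cast this

theorem stmt_1 (a b p : ℝ) (hb : 0 ≤ b) (hab : b ≤ a) (hp1 : 1 ≤ p) (hp2 : p ≤ 2) :
    (a - b) * (a ^ (p - 1) - b ^ (p - 1)) ≤ (a - b) ^ p := by
  rcases eq_or_lt_of_le hab with h | h
  · subst h
    simp
    positivity
  · have hc : 0 < a - b := by linarith
    have key : a ^ (p - 1) - b ^ (p - 1) ≤ (a - b) ^ (p - 1) := by
      have : a ^ (p - 1) ≤ (a - b) ^ (p - 1) + b ^ (p - 1) := by
        have := rpow_add_le_add_rpow_real (x := a - b) (y := b) (q := p - 1) hc.le hb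
          (by linarith) (by linarith)
        rwa [sub_add_cancel] at this
      linarith
    calc (a - b) * (a ^ (p - 1) - b ^ (p - 1)) ≤ (a - b) * (a - b) ^ (p - 1) := by
          exact mul_le_mul_of_nonneg_left key hc.le
      _ = (a - b) ^ p := by
          nth_rewrite 1 [← Real.rpow_one (a - b)]
          rw [← Real.rpow_add hc]
          norm_num
end

section
/- For p ≥ 1 and positive semidefinite n×n complex matrices A and B, Tr((A - B)(A^(p-1) - B^(p-1))) ≥ 0. -/
open Matrix ComplexOrder

private lemma trace_diag_conj {n : Type*} [Fintype n] [DecidableEq n]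
    (W : Matrix n n ℂ) (d e : n → ℂ) :
    Matrix.trace (Matrix.diagonal d * W * Matrix.diagonal e * star W)
      = ∑ i, ∑ j, d i * e j * (W i j * star (W i j)) := by
  simp only [Matrix.trace, Matrix.diag_apply, Matrix.mul_apply, Matrix.diagonal_apply,
    Matrix.star_apply, ite_mul, zero_mul, mul_ite, mul_zero, Finset.sum_ite_eq,
    Finset.sum_ite_eq', Finset.mem_univ, if_true, Finset.sum_mul]
  exact Finset.sum_congr rfl fun i _ => Finset.sum_congr rfl fun j _ => by ring

private lemma trace_conj_conj {n : Type*} [Fintype n] [DecidableEq n]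
    (U V D1 D2 : Matrix n n ℂ) :
    Matrix.trace (U * D1 * star U * (V * D2 * star V))
      = Matrix.trace (D1 * (star U * V) * D2 * star (star U * V)) := by
  rw [Matrix.star_mul, star_star,
    show U * D1 * star U * (V * D2 * star V)
      = U * (D1 * (star U * V) * D2 * star V) from by noncomm_ring,
    Matrix.trace_mul_comm]
  congr 1
  noncomm_ring

private lemma trace_key {n : Type*} [Fintype n] [DecidableEq n] (U V : Matrix n n ℂ)
    (d e : n → ℝ) :
    Matrix.trace ((U * Matrix.diagonal (fun i => (d i : ℂ)) * star U) *
      (V * Matrix.diagonal (fun j => (e j : ℂ)) * star V))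
      = ((∑ i, ∑ j, Complex.normSq ((star U * V) i j) * d i * e j : ℝ) : ℂ) := by
  rw [show U * Matrix.diagonal (fun i => (d i : ℂ)) * star U *
      (V * Matrix.diagonal (fun j => (e j : ℂ)) * star V)
      = U * Matrix.diagonal (fun i => (d i : ℂ)) * star U *
      (V * Matrix.diagonal (fun j => (e j : ℂ)) * star V) from rfl,
    trace_conj_conj, trace_diag_conj]
  simp only [RCLike.star_def, Complex.mul_conj]
  push_cast
  exact Finset.sum_congr rfl fun i _ => Finset.sum_congr rfl fun j _ => by ring

theorem stmt_2 {n : Type*} [Fintype n] [DecidableEq n] (p : ℝ) (hp : 1 ≤ p)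
    (A B : Matrix n n ℂ) (hA : A.PosSemidef) (hB : B.PosSemidef) :
    0 ≤ Matrix.trace ((A - B) *
      (cfc (fun x : ℝ => x ^ (p - 1)) A - cfc (fun x : ℝ => x ^ (p - 1)) B)) := by
  have hA' := hA.1
  have hB' := hB.1
  set f : ℝ → ℝ := fun x : ℝ => x ^ (p - 1) with hfdef
  set a : n → ℝ := hA'.eigenvalues with ha_def
  set b : n → ℝ := hB'.eigenvalues with hb_def
  set U : Matrix n n ℂ := (Matrix.IsHermitian.eigenvectorUnitary hA' : Matrix n n ℂ) with hUdef
  set V : Matrix n n ℂ := (Matrix.IsHermitian.eigenvectorUnitary hB' : Matrix n n ℂ) with hVdef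
  set W : Matrix n n ℂ := star U * V with hWdef
  set c : n → n → ℝ := fun i j => Complex.normSq (W i j) with hcdef
  -- unitarity facts
  have hU1 : star U * U = 1 := Matrix.mem_unitaryGroup_iff'.mp
    (Matrix.IsHermitian.eigenvectorUnitary hA').2
  have hU2 : U * star U = 1 := Matrix.mem_unitaryGroup_iff.mp
    (Matrix.IsHermitian.eigenvectorUnitary hA').2
  have hV1 : star V * V = 1 := Matrix.mem_unitaryGroup_iff'.mp
    (Matrix.IsHermitian.eigenvectorUnitary hB').2
  have hV2 : V * star V = 1 := Matrix.mem_unitaryGroup_iff.mp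
    (Matrix.IsHermitian.eigenvectorUnitary hB').2
  have hWW : W * star W = 1 := by
    rw [hWdef, Matrix.star_mul, star_star,
      show star U * V * (star V * U) = star U * (V * star V) * U from by noncomm_ring,
      hV2, mul_one, hU1]
  have hWW' : star W * W = 1 := by
    rw [hWdef, Matrix.star_mul, star_star,
      show star V * U * (star U * V) = star V * (U * star U) * V from by noncomm_ring,
      hU2, mul_one, hV1]
  have hentry : ∀ i j, W i j * star (W i j) = ((c i j : ℝ) : ℂ) := fun i j => by
    simp [hcdef, RCLike.star_def, Complex.mul_conj]
  -- row and column sums of c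
  have hrow : ∀ i, ∑ j, c i j = 1 := by
    intro i
    have h1 : (W * star W) i i = 1 := by rw [hWW]; simp [Matrix.one_apply]
    rw [Matrix.mul_apply] at h1
    have h2 : ((∑ j, c i j : ℝ) : ℂ) = 1 := by
      push_cast
      rw [← h1]
      exact Finset.sum_congr rfl fun j _ => by
        rw [Matrix.star_apply, hentry i j]
    exact_mod_cast h2
  have hcol : ∀ j, ∑ i, c i j = 1 := by
    intro j
    have h1 : (star W * W) j j = 1 := by rw [hWW']; simp [Matrix.one_apply]
    rw [Matrix.mul_apply] at h1
    have h2 : ((∑ i, c i j : ℝ) : ℂ) = 1 := by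
      push_cast
      rw [← h1]
      exact Finset.sum_congr rfl fun i _ => by
        rw [Matrix.star_apply, ← hentry i j]; ring
    exact_mod_cast h2
  -- spectral decompositions
  have hAeq : A = U * Matrix.diagonal (fun i => ((a i : ℝ) : ℂ)) * star U :=
    hA'.spectral_theorem
  have hBeq : B = V * Matrix.diagonal (fun j => ((b j : ℝ) : ℂ)) * star V :=
    hB'.spectral_theorem
  have hfA : cfc f A = U * Matrix.diagonal (fun i => ((f (a i) : ℝ) : ℂ)) * star U := by
    rw [hA'.cfc_eq]; rfl
  have hfB : cfc f B = V * Matrix.diagonal (fun j => ((f (b j) : ℝ) : ℂ)) * star V := by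
    rw [hB'.cfc_eq]; rfl
  rw [hfA, hfB, hAeq, hBeq, Matrix.sub_mul, Matrix.mul_sub, Matrix.mul_sub,
    Matrix.trace_sub, Matrix.trace_sub, Matrix.trace_sub,
    trace_key U U a (fun i => f (a i)), trace_key U V a (fun j => f (b j)),
    trace_key V U b (fun j => f (a j)), trace_key V V b (fun j => f (b j)),
    ← Complex.ofReal_sub, ← Complex.ofReal_sub, ← Complex.ofReal_sub]
  rw [Complex.zero_le_real]
  have hone : ∀ (d e : n → ℝ),
      ∑ i, ∑ j, Complex.normSq ((1 : Matrix n n ℂ) i j) * d i * e j = ∑ i, d i * e i := by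
    intro d e
    simp [Matrix.one_apply, apply_ite Complex.normSq, ite_mul]
  have hstarW : ∀ i j, Complex.normSq ((star V * U) i j) = c j i := by
    intro i j
    have : star V * U = star W := by rw [hWdef, Matrix.star_mul, star_star]
    rw [this, Matrix.star_apply, RCLike.star_def, Complex.normSq_conj]
  have e1 : ∑ i, ∑ j, Complex.normSq ((star U * U) i j) * a i * f (a j)
      = ∑ i, ∑ j, c i j * (a i * f (a i)) := by
    rw [hU1, hone]
    exact Finset.sum_congr rfl fun i _ => by
      rw [← Finset.sum_mul, hrow i, one_mul]
  have e4 : ∑ i, ∑ j, Complex.normSq ((star V * V) i j) * b i * f (b j)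
      = ∑ i, ∑ j, c i j * (b j * f (b j)) := by
    rw [hV1, hone, Finset.sum_comm]
    exact Finset.sum_congr rfl fun j _ => by
      rw [← Finset.sum_mul, hcol j, one_mul]
  have e3 : ∑ i, ∑ j, Complex.normSq ((star V * U) i j) * b i * f (a j)
      = ∑ i, ∑ j, c i j * (b j * f (a i)) := by
    rw [Finset.sum_comm]
    exact Finset.sum_congr rfl fun i _ => Finset.sum_congr rfl fun j _ => by
      rw [hstarW j i]; ring
  rw [e1, e3, e4]
  have hcomb : ∑ i, ∑ j, c i j * (a i * f (a i))
      - ∑ i, ∑ j, Complex.normSq ((star U * V) i j) * a i * f (b j)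
      - (∑ i, ∑ j, c i j * (b j * f (a i)) - ∑ i, ∑ j, c i j * (b j * f (b j)))
      = ∑ i, ∑ j, c i j * ((a i - b j) * (f (a i) - f (b j))) := by
    rw [← Finset.sum_sub_distrib, ← Finset.sum_sub_distrib, ← Finset.sum_sub_distrib]
    refine Finset.sum_congr rfl fun i _ => by
      rw [← Finset.sum_sub_distrib, ← Finset.sum_sub_distrib, ← Finset.sum_sub_distrib]
      exact Finset.sum_congr rfl fun j _ => by
        have : Complex.normSq ((star U * V) i j) = c i j := rfl
        rw [this]; ring
  rw [hcomb]
  refine Finset.sum_nonneg fun i _ => Finset.sum_nonneg fun j _ => ?_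
  refine mul_nonneg (Complex.normSq_nonneg _) ?_
  have hai : 0 ≤ a i := hA.eigenvalues_nonneg i
  have hbj : 0 ≤ b j := hB.eigenvalues_nonneg j
  have hp' : 0 ≤ p - 1 := by linarith
  rcases le_total (a i) (b j) with h | h
  · have hf : f (a i) ≤ f (b j) := Real.rpow_le_rpow hai h hp'
    nlinarith
  · have hf : f (b j) ≤ f (a i) := Real.rpow_le_rpow hbj h hp'
    nlinarith
end

section
/- Klein's inequality: if f is a differentiable convex function on (0, ∞) and A, B are positive definite n×n Hermitian matrices, then Tr(f(A) - f(B)) ≥ Tr((A - B) f'(B)). -/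
/-!
Diagonalize `A = U diag(a) U*` and `B = V diag(b) V*` and put `W = U* V`. Then for all functions
`g h`, `Tr (g(A) h(B)) = ∑ i j, |W i j|² g(a i) h(b j)`; taking `g` or `h` to be the constant `1`
covers the single-matrix traces too. Hence
`Tr (f(A) - f(B) - (A - B) f'(B)) = ∑ i j, |W i j|² (f(a i) - f(b j) - (a i - b j) f'(b j))`,
and every summand is nonnegative by the tangent line inequality for the convex function `f`.
-/

open Matrix ComplexOrder

lemma ConvexOn.mul_sub_le_sub_of_hasDerivAt {S : Set ℝ} {f : ℝ → ℝ} {f' x y : ℝ}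
    (hf : ConvexOn ℝ S f) (hx : x ∈ S) (hy : y ∈ S) (hd : HasDerivAt f f' y) :
    f' * (x - y) ≤ f x - f y := by
  rcases lt_trichotomy x y with hxy | rfl | hxy
  · have := hf.slope_le_of_hasDerivAt hx hy hxy hd
    rw [slope_def_field, div_le_iff₀ (sub_pos.2 hxy)] at this
    linarith
  · simp
  · have := hf.le_slope_of_hasDerivAt hy hx hxy hd
    rwa [slope_def_field, le_div_iff₀ (sub_pos.2 hxy)] at this

namespace Matrix

lemma trace_diagonal_mul_mul_diagonal_mul_conjTranspose {m n R : Type*} [Fintype m] [Fintype n]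
    [DecidableEq m] [DecidableEq n] [CommSemiring R] [StarRing R]
    (d : m → R) (e : n → R) (W : Matrix m n R) :
    trace (diagonal d * W * diagonal e * Wᴴ) = ∑ i, ∑ j, d i * e j * (W i j * star (W i j)) := by
  simp only [trace, diag_apply, mul_apply (M := diagonal d * W * diagonal e), mul_diagonal,
    diagonal_mul, conjTranspose_apply]
  refine Finset.sum_congr rfl fun i _ ↦ Finset.sum_congr rfl fun j _ ↦ ?_
  ring

variable {n 𝕜 : Type*} [Fintype n] [DecidableEq n] [RCLike 𝕜] {A B : Matrix n n 𝕜}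

lemma IsHermitian.trace_cfc_mul_cfc (hA : A.IsHermitian) (hB : B.IsHermitian) (g h : ℝ → ℝ) :
    trace (cfc g A * cfc h B) =
      ((∑ i, ∑ j, ‖(star (hA.eigenvectorUnitary : Matrix n n 𝕜) * hB.eigenvectorUnitary) i j‖ ^ 2
        * (g (hA.eigenvalues i) * h (hB.eigenvalues j)) : ℝ) : 𝕜) := by
  set U : Matrix n n 𝕜 := ↑hA.eigenvectorUnitary
  set V : Matrix n n 𝕜 := ↑hB.eigenvectorUnitary
  have hU : star U * U = 1 := Unitary.star_mul_self_of_mem (SetLike.coe_mem _)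
  have hU' : U * star U = 1 := Unitary.mul_star_self_of_mem (SetLike.coe_mem _)
  have hconj : cfc g A * cfc h B = U * (diagonal (RCLike.ofReal ∘ g ∘ hA.eigenvalues) *
      (star U * V) * diagonal (RCLike.ofReal ∘ h ∘ hB.eigenvalues) * (star U * V)ᴴ) * star U := by
    simp only [hA.cfc_eq, hB.cfc_eq, IsHermitian.cfc, Unitary.conjStarAlgAut_apply,
      ← star_eq_conjTranspose, star_mul, star_star, Matrix.mul_assoc]
    rw [hU', Matrix.mul_one]
  rw [hconj, trace_mul_cycle, ← Matrix.mul_assoc, hU, Matrix.one_mul,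
    trace_diagonal_mul_mul_diagonal_mul_conjTranspose]
  push_cast
  simp only [Function.comp_apply, RCLike.star_def, RCLike.mul_conj]
  refine Finset.sum_congr rfl fun i _ ↦ Finset.sum_congr rfl fun j _ ↦ ?_
  ring

end Matrix

theorem stmt_3 {n : Type*} [Fintype n] [DecidableEq n] (f f' : ℝ → ℝ)
    (hconv : ConvexOn ℝ (Set.Ioi (0 : ℝ)) f)
    (hderiv : ∀ x ∈ Set.Ioi (0 : ℝ), HasDerivAt f (f' x) x)
    (A B : Matrix n n ℂ) (hA : A.PosDef) (hB : B.PosDef) :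
    Matrix.trace ((A - B) * cfc f' B) ≤ Matrix.trace (cfc f A - cfc f B) := by
  have hAh := hA.isHermitian
  have hBh := hB.isHermitian
  have hfA : trace (cfc f A) = trace (cfc f A * cfc (fun _ ↦ (1 : ℝ)) B) := by
    rw [cfc_const_one ℝ B, Matrix.mul_one]
  have hfB : trace (cfc f B) = trace (cfc (fun _ ↦ (1 : ℝ)) A * cfc f B) := by
    rw [cfc_const_one ℝ A, Matrix.one_mul]
  have hAf'B : trace (A * cfc f' B) = trace (cfc (fun x : ℝ ↦ x) A * cfc f' B) := by
    rw [cfc_id' ℝ A]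
  have hBf'B :
      trace (B * cfc f' B) = trace (cfc (fun _ ↦ (1 : ℝ)) A * cfc (fun x ↦ x * f' x) B) := by
    rw [cfc_const_one ℝ A, Matrix.one_mul,
      cfc_mul (fun x ↦ x) f' B (hg := B.finite_real_spectrum.continuousOn f'), cfc_id' ℝ B]
  rw [Matrix.sub_mul, trace_sub, trace_sub, hfA, hfB, hAf'B, hBf'B]
  simp only [hAh.trace_cfc_mul_cfc hBh, ← RCLike.ofReal_sub, RCLike.ofReal_le_ofReal,
    ← Finset.sum_sub_distrib]
  refine Finset.sum_le_sum fun i _ ↦ Finset.sum_le_sum fun j _ ↦ ?_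
  have hai : hAh.eigenvalues i ∈ Set.Ioi 0 := hA.eigenvalues_pos i
  have hbj : hBh.eigenvalues j ∈ Set.Ioi 0 := hB.eigenvalues_pos j
  have tangent := hconv.mul_sub_le_sub_of_hasDerivAt hai hbj (hderiv _ hbj)
  rw [← mul_sub, ← mul_sub]
  exact mul_le_mul_of_nonneg_left (by linarith) (sq_nonneg _)
end

section
/- Powers–Størmer inequality: for positive semidefinite n×n complex matrices A, B and s ∈ [0,1], Tr(A + B - |A - B|) ≤ 2 Tr(A^s B^(1-s)). -/
open Matrix ComplexOrder

noncomputable def matAbs {n : Type*} [Fintype n] [DecidableEq n] (X : Matrix n n ℂ) :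
    Matrix n n ℂ := cfc Real.sqrt (Xᴴ * X)

/-!
The inequality holds for every positive tracial functional `τ` on a unital C⋆-algebra. With
`d = a - b` and `t = b + d⁺` one has `a ≤ t`, `b ≤ t` and `a + b - |a - b| = 2 (a + b - t)`.
Writing `x₁ = x ^ s`, `x₂ = x ^ (1 - s)`, so that `x₁ x₂ = x`, the identity
`a₁ b₂ - (a + b - t) = (t₁ - a₁)(t₂ - b₂) + a₁ (t₂ - a₂) + (t₁ - b₁) b₂`
exhibits the defect as a sum of products of positive elements, by operator monotonicity of
`x ↦ x ^ p` for `p ∈ [0, 1]`; a tracial positive functional is nonnegative on such products.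
-/

namespace PowersStormer

variable {A : Type*} [CStarAlgebra A] [PartialOrder A] [StarOrderedRing A]

theorem map_mul_nonneg_of_tracial {τ : A →ₚ[ℂ] ℂ} (hτ : ∀ x y, τ (x * y) = τ (y * x))
    {a b : A} (ha : 0 ≤ a) (hb : 0 ≤ b) : 0 ≤ τ (a * b) := by
  have hsqrt : IsSelfAdjoint (CFC.sqrt a) := (CFC.sqrt_nonneg a).isSelfAdjoint
  calc 0 ≤ τ (CFC.sqrt a * b * CFC.sqrt a) := τ.map_nonneg (hsqrt.conjugate_nonneg hb)
    _ = τ (a * b) := by rw [hτ, ← mul_assoc, CFC.sqrt_mul_sqrt_self a ha]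

theorem rpow_mul_rpow_one_sub {a : A} (ha : 0 ≤ a) {s : ℝ} (hs0 : 0 ≤ s) (hs1 : s ≤ 1) :
    a ^ s * a ^ (1 - s) = a := by
  rw [CFC.rpow_eq_cfc_real ha, CFC.rpow_eq_cfc_real ha,
    ← cfc_mul _ _ a (Real.continuous_rpow_const hs0).continuousOn
      (Real.continuous_rpow_const (sub_nonneg.mpr hs1)).continuousOn]
  conv_rhs => rw [← cfc_id' ℝ a]
  refine cfc_congr fun x hx => ?_
  rw [← Real.rpow_add' (spectrum_nonneg_of_nonneg ha hx) (by norm_num), add_sub_cancel,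
    Real.rpow_one]

theorem mul_sub_add_sub_eq {R : Type*} [Ring R] {a b t a₁ a₂ b₁ b₂ t₁ t₂ : R}
    (ha : a₁ * a₂ = a) (hb : b₁ * b₂ = b) (ht : t₁ * t₂ = t) :
    a₁ * b₂ - (a + b - t) = (t₁ - a₁) * (t₂ - b₂) + a₁ * (t₂ - a₂) + (t₁ - b₁) * b₂ := by
  subst ha hb ht
  noncomm_ring

theorem add_sub_abs_sub_eq {a b : A} (hab : IsSelfAdjoint (a - b)) :
    a + b - CFC.abs (a - b) = 2 • (a - (a - b)⁺) := by
  rw [eq_sub_of_add_eq (CFC.abs_add_self (a - b) hab)]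
  abel

theorem le_add_posPart_sub {a b : A} (hab : IsSelfAdjoint (a - b)) : a ≤ b + (a - b)⁺ := by
  have h := CFC.posPart_sub_negPart (a - b) hab
  rw [← sub_nonneg]
  calc (0 : A) ≤ (a - b)⁻ := CFC.negPart_nonneg _
    _ = (a - b)⁺ - ((a - b)⁺ - (a - b)⁻) := (sub_sub_cancel _ _).symm
    _ = b + (a - b)⁺ - a := by rw [h]; abel

theorem map_add_sub_abs_sub_le {τ : A →ₚ[ℂ] ℂ} (hτ : ∀ x y, τ (x * y) = τ (y * x))
    {a b : A} (ha : 0 ≤ a) (hb : 0 ≤ b) {s : ℝ} (hs0 : 0 ≤ s) (hs1 : s ≤ 1) :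
    τ (a + b - CFC.abs (a - b)) ≤ 2 * τ (a ^ s * b ^ (1 - s)) := by
  have hs : s ∈ Set.Icc (0 : ℝ) 1 := ⟨hs0, hs1⟩
  have hs' : 1 - s ∈ Set.Icc (0 : ℝ) 1 := ⟨sub_nonneg.mpr hs1, sub_le_self _ hs0⟩
  have hab : IsSelfAdjoint (a - b) := ha.isSelfAdjoint.sub hb.isSelfAdjoint
  set t := b + (a - b)⁺
  have hat : a ≤ t := le_add_posPart_sub hab
  have hbt : b ≤ t := le_add_of_nonneg_right (CFC.posPart_nonneg _)
  have hX₁ := map_mul_nonneg_of_tracial hτ (sub_nonneg.mpr (CFC.rpow_le_rpow hs hat))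
    (sub_nonneg.mpr (CFC.rpow_le_rpow hs' hbt))
  have hX₂ := map_mul_nonneg_of_tracial hτ (CFC.rpow_nonneg (a := a) (y := s))
    (sub_nonneg.mpr (CFC.rpow_le_rpow hs' hat))
  have hX₃ := map_mul_nonneg_of_tracial hτ (sub_nonneg.mpr (CFC.rpow_le_rpow hs hbt))
    (CFC.rpow_nonneg (a := b) (y := 1 - s))
  have key := mul_sub_add_sub_eq (rpow_mul_rpow_one_sub ha hs0 hs1)
    (rpow_mul_rpow_one_sub hb hs0 hs1) (rpow_mul_rpow_one_sub (hb.trans hbt) hs0 hs1)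
  rw [← sub_nonneg, add_sub_abs_sub_eq hab, map_nsmul, nsmul_eq_mul, Nat.cast_ofNat, ← mul_sub,
    show a - (a - b)⁺ = a + b - (b + (a - b)⁺) by abel, ← map_sub, key, map_add, map_add]
  exact mul_nonneg zero_le_two (add_nonneg (add_nonneg hX₁ hX₂) hX₃)

end PowersStormer

theorem stmt_5 {n : Type*} [Fintype n] [DecidableEq n] (s : ℝ) (hs0 : 0 ≤ s) (hs1 : s ≤ 1)
    (A B : Matrix n n ℂ) (hA : A.PosSemidef) (hB : B.PosSemidef) :
    Matrix.trace (A + B - matAbs (A - B)) ≤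
      2 * Matrix.trace (cfc (fun x : ℝ => x ^ s) A * cfc (fun x : ℝ => x ^ (1 - s)) B) := by
  open scoped MatrixOrder Matrix.Norms.L2Operator in
  · have habs : matAbs (A - B) = CFC.abs (A - B) := by
      rw [CFC.abs, CFC.sqrt_eq_real_sqrt _ (star_mul_self_nonneg _), cfcₙ_eq_cfc]
      rfl
    rw [habs, ← CFC.rpow_eq_cfc_real hA.nonneg, ← CFC.rpow_eq_cfc_real hB.nonneg]
    exact PowersStormer.map_add_sub_abs_sub_le (τ := tracePositiveLinearMap n ℂ ℂ)
      Matrix.trace_mul_comm hA.nonneg hB.nonneg hs0 hs1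
end

section
/- For positive semidefinite matrices B, C and s > 0, Tr(C (B + sI)⁻¹ C (B + C + sI)⁻¹) ≤ s⁻¹ Tr(C² (C + sI)⁻¹). -/
/-!
Inversion is antitone on positive definite matrices, so `(B + sI)⁻¹ ≤ s⁻¹ I` and
`(B + C + sI)⁻¹ ≤ (C + sI)⁻¹`. Conjugating the first bound by `C` gives
`C (B + sI)⁻¹ C ≤ s⁻¹ C²`, and both bounds survive under the trace because
`Tr(A M) ≥ 0` whenever `A, M ≥ 0`.
-/

open Matrix ComplexOrder
open scoped MatrixOrder

namespace Matrix

section trace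

variable {n 𝕜 : Type*} [Fintype n] [RCLike 𝕜]

lemma trace_mul_nonneg {A M : Matrix n n 𝕜} (hA : 0 ≤ A) (hM : 0 ≤ M) :
    0 ≤ (A * M).trace := by
  classical
  obtain ⟨R, rfl⟩ := CStarAlgebra.nonneg_iff_eq_star_mul_self.mp hA
  rw [mul_assoc, trace_mul_comm, star_eq_conjTranspose]
  exact (hM.posSemidef.mul_mul_conjTranspose_same R).trace_nonneg

lemma trace_mul_le_trace_mul_left {A A' M : Matrix n n 𝕜} (hA : A ≤ A') (hM : 0 ≤ M) :
    (A * M).trace ≤ (A' * M).trace := by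
  simpa [sub_mul] using trace_mul_nonneg (sub_nonneg.mpr hA) hM

lemma trace_mul_le_trace_mul_right {M A A' : Matrix n n 𝕜} (hM : 0 ≤ M) (hA : A ≤ A') :
    (M * A).trace ≤ (M * A').trace := by
  simpa only [trace_mul_comm M] using trace_mul_le_trace_mul_left hA hM

end trace

open scoped Norms.L2Operator in
lemma PosDef.inv_le_inv {n : Type*} [Fintype n] [DecidableEq n] {A B : Matrix n n ℂ}
    (hA : A.PosDef) (hAB : A ≤ B) : B⁻¹ ≤ A⁻¹ := by
  have hB : B.PosDef := by simpa using hA.add_posSemidef (le_iff.mp hAB)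
  simpa using CStarAlgebra.inv_le_inv (a := hA.isUnit.unit) (b := hB.isUnit.unit)
    hA.posSemidef.nonneg hAB

end Matrix

theorem stmt_13 {n : Type*} [Fintype n] [DecidableEq n] (s : ℝ) (hs : 0 < s)
    (B C : Matrix n n ℂ) (hB : B.PosSemidef) (hC : C.PosSemidef) :
    Matrix.trace (C * (B + s • (1 : Matrix n n ℂ))⁻¹ * C *
        (B + C + s • (1 : Matrix n n ℂ))⁻¹) ≤
      (s : ℂ)⁻¹ * Matrix.trace (C ^ 2 * (C + s • (1 : Matrix n n ℂ))⁻¹) := by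
  have hsI : (s • (1 : Matrix n n ℂ)).PosDef := PosDef.one.smul hs
  have hX : (C + s • (1 : Matrix n n ℂ)).PosDef := hsI.posSemidef_add hC
  have hY : (B + C + s • (1 : Matrix n n ℂ)).PosDef := hsI.posSemidef_add (hB.add hC)
  have hZ_inv : (B + s • (1 : Matrix n n ℂ))⁻¹ ≤ s⁻¹ • 1 := by
    have hsI_inv : (s • (1 : Matrix n n ℂ))⁻¹ = s⁻¹ • 1 :=
      inv_eq_left_inv (by simp [smul_smul, hs.ne'])
    simpa [hsI_inv] using hsI.inv_le_inv (le_add_of_nonneg_left hB.nonneg)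
  have hY_inv : (B + C + s • (1 : Matrix n n ℂ))⁻¹ ≤ (C + s • 1)⁻¹ :=
    hX.inv_le_inv (by rw [add_assoc]; exact le_add_of_nonneg_left hB.nonneg)
  have hCZC : C * (B + s • 1)⁻¹ * C ≤ s⁻¹ • C ^ 2 := by
    simpa [hC.isHermitian.isSelfAdjoint.star_eq, pow_two] using
      star_left_conjugate_le_conjugate hZ_inv C
  calc _ ≤ (s⁻¹ • C ^ 2 * (B + C + s • (1 : Matrix n n ℂ))⁻¹).trace :=
        trace_mul_le_trace_mul_left hCZC hY.posSemidef.inv.nonneg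
    _ = (s : ℂ)⁻¹ * (C ^ 2 * (B + C + s • (1 : Matrix n n ℂ))⁻¹).trace := by
        simp [Complex.real_smul]
    _ ≤ _ := by
        gcongr
        exact trace_mul_le_trace_mul_right (hC.pow 2).nonneg hY_inv
end
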